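/- arXiv:1010.3798 — 4 statements merged into one kernel-verified Lean document; each statement's English description precedes it below -/
import Mathlib

section
/- There is ε₀ > 0 such that for every ε with 0 < ε < ε₀ and every integer y₀: the system of inequalities ⋀_{i=1}^n |γ_i(y₀) − r_i| < ε holds if and only if there exist integers y₁,…,yₙ such that ⋀_{i=1}^n |σ_i(y₀,…,y_{i−1}) − y_i − r_i| < ε. -/
/-!
A window of width `ε ≤ min (rᵢ, 1 - rᵢ)` around `zᵢ + rᵢ` lies strictly between `zᵢ` and
`zᵢ + 1`, so any integer solution `z` of the second system satisfies
`zᵢ = ⌊σᵢ(y₀, z₁, …, z_{i-1})⌋`. This recursion has exactly one solution, since `σᵢ` only sees the `zⱼ` with `j < i`; hence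
`z = (y₁(y₀), …, yₙ(y₀))`, and the two systems agree.
-/

open Filter Topology

theorem Int.floor_eq_of_abs_sub_sub_lt {α : Type*} [Field α] [LinearOrder α] [IsStrictOrderedRing α]
    [FloorRing α] {t r ε : α} {k : ℤ} (h : |t - k - r| < ε) (hεr : ε ≤ r) (hεr' : ε ≤ 1 - r) :
    ⌊t⌋ = k := by
  rw [abs_lt] at h
  exact Int.floor_eq_iff.mpr ⟨by linarith, by linarith⟩

theorem eventually_nhdsGT_zero_forall_le_and_le_one_sub {ι α : Type*} [Finite ι] [Field α]
    [LinearOrder α] [IsStrictOrderedRing α] [TopologicalSpace α] [OrderTopology α] {r : ι → α}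
    (hr : ∀ i, r i ∈ Set.Ioo (0 : α) 1) : ∀ᶠ ε in 𝓝[>] 0, ∀ i, ε ≤ r i ∧ ε ≤ 1 - r i := by
  refine eventually_all.2 fun i => ?_
  have hpos : 0 < min (r i) (1 - r i) := lt_min (hr i).1 (sub_pos.2 (hr i).2)
  filter_upwards [Ioo_mem_nhdsGT hpos] with ε hε
  exact ⟨hε.2.le.trans (min_le_left _ _), hε.2.le.trans (min_le_right _ _)⟩

theorem eq_of_forall_eq_of_causal {ι α : Type*} [Preorder ι] [WellFoundedLT ι]
    {g : ι → (ι → α) → α} (hg : ∀ i z w, (∀ j < i, z j = w j) → g i z = g i w)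
    {z w : ι → α} (hz : ∀ i, z i = g i z) (hw : ∀ i, w i = g i w) : z = w :=
  funext fun i => WellFoundedLT.induction (motive := fun i => z i = w i) i
    fun i ih => by rw [hz i, hw i, hg i z w ih]

/-- The argument `(y₀, z₁, …, zᵢ)` of the polynomial `σ_{i+1}`, with indices shifted to start
at `0`. -/
def prefixArgs {n : ℕ} (x : ℤ) (z : Fin n → ℤ) (i : Fin n) : Fin ((i : ℕ) + 1) → ℝ :=
  fun m => if (m : ℕ) = 0 then (x : ℝ)
    else (z ⟨(m : ℕ) - 1, (Nat.sub_le _ _).trans_lt (m.is_le.trans_lt i.isLt)⟩ : ℝ)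

theorem prefixArgs_congr {n : ℕ} (x : ℤ) {z w : Fin n → ℤ} {i : Fin n}
    (h : ∀ j < i, z j = w j) : prefixArgs x z i = prefixArgs x w i := by
  funext m
  unfold prefixArgs
  split_ifs with hm
  · rfl
  · rw [h _ (Fin.lt_def.2 (by have := m.isLt; simp only; omega))]

/-- Proposition 3.4: let `σ₁(y₀), …, σₙ(y₀,…,y_{n−1})` be real polynomials,
`0 < rᵢ < 1`, and define recursively `yᵢ(y₀) = ⌊σᵢ(y₀, y₁(y₀), …, y_{i−1}(y₀))⌋` and
`γᵢ(y₀) = σᵢ(y₀, y₁(y₀), …, y_{i−1}(y₀)) − yᵢ(y₀)`.  Then for all sufficiently small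
`ε > 0`, an integer `y₀` satisfies `⋀ᵢ |γᵢ(y₀) − rᵢ| < ε` iff there are integers
`y₁,…,yₙ` with `⋀ᵢ |σᵢ(y₀,…,y_{i−1}) − yᵢ − rᵢ| < ε`. -/
theorem generalized_poly_system_iff (n : ℕ)
    (σp : ∀ i : Fin n, MvPolynomial (Fin ((i : ℕ) + 1)) ℝ)
    (r : Fin n → ℝ) (hr : ∀ i, r i ∈ Set.Ioo (0 : ℝ) 1)
    (y : Fin n → ℤ → ℤ) (γ : Fin n → ℤ → ℝ)
    (hy : ∀ (i : Fin n) (x : ℤ),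
      y i x = ⌊MvPolynomial.eval
        (fun m : Fin ((i : ℕ) + 1) =>
          if (m : ℕ) = 0 then (x : ℝ)
          else (y ⟨(m : ℕ) - 1, by have := m.isLt; have := i.isLt; omega⟩ x : ℝ))
        (σp i)⌋)
    (hγ : ∀ (i : Fin n) (x : ℤ),
      γ i x = MvPolynomial.eval
        (fun m : Fin ((i : ℕ) + 1) =>
          if (m : ℕ) = 0 then (x : ℝ)
          else (y ⟨(m : ℕ) - 1, by have := m.isLt; have := i.isLt; omega⟩ x : ℝ))
        (σp i) - (y i x : ℝ)) :
    ∃ ε₀ : ℝ, 0 < ε₀ ∧ ∀ ε : ℝ, 0 < ε → ε < ε₀ → ∀ x : ℤ,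
      ((∀ i : Fin n, |γ i x - r i| < ε) ↔
        ∃ z : Fin n → ℤ, ∀ i : Fin n,
          |MvPolynomial.eval
            (fun m : Fin ((i : ℕ) + 1) =>
              if (m : ℕ) = 0 then (x : ℝ)
              else (z ⟨(m : ℕ) - 1, by have := m.isLt; have := i.isLt; omega⟩ : ℝ))
            (σp i) - (z i : ℝ) - r i| < ε) := by
  obtain ⟨ε₀, hε₀, hsmall⟩ :=
    (nhdsGT_basis (0 : ℝ)).eventually_iff.1 (eventually_nhdsGT_zero_forall_le_and_le_one_sub hr)
  refine ⟨ε₀, hε₀, fun ε hε hεε₀ x => ⟨fun h => ⟨(y · x), fun i => hγ i x ▸ h i⟩, ?_⟩⟩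
  rintro ⟨z, hz⟩
  have hεr := hsmall ⟨hε, hεε₀⟩
  have hzy : z = (y · x) :=
    eq_of_forall_eq_of_causal (g := fun i w => ⌊MvPolynomial.eval (prefixArgs x w i) (σp i)⌋)
      (fun i _ _ h => by rw [prefixArgs_congr x h])
      (fun i => (Int.floor_eq_of_abs_sub_sub_lt (hz i) (hεr i).1 (hεr i).2).symm)
      (fun i => hy i x)
  subst hzy
  exact fun i => hγ i x ▸ hz i
end

section
/- For every integer x, ({√2·x})² = {2·√2·x·{√2·x}}. -/
/-!
With `y = √2·x`, expanding `y² = (⌊y⌋ + {y})²` gives `2·y·{y} = {y}² + (y² - ⌊y⌋²)`, where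
`y² - ⌊y⌋² = 2x² - ⌊y⌋²` is an integer; as `{y}² ∈ [0, 1)`, it is the fractional part of `2·y·{y}`.
-/

theorem Int.two_mul_mul_fract_eq_fract_sq_add {α : Type*} [CommRing α] [LinearOrder α]
    [FloorRing α] (y : α) :
    2 * y * Int.fract y = Int.fract y ^ 2 + (y ^ 2 - (⌊y⌋ : α) ^ 2) := by
  rw [Int.fract]
  ring

theorem Int.fract_two_mul_mul_fract_of_sq_eq_intCast {α : Type*} [CommRing α] [LinearOrder α]
    [IsStrictOrderedRing α] [FloorRing α] {y : α} {m : ℤ} (hy : y ^ 2 = m) :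
    Int.fract (2 * y * Int.fract y) = Int.fract y ^ 2 := by
  have hint : y ^ 2 - (⌊y⌋ : α) ^ 2 = ((m - ⌊y⌋ ^ 2 : ℤ) : α) := by
    push_cast
    rw [hy]
  have hsq_lt_one : Int.fract y ^ 2 < 1 :=
    pow_lt_one₀ (Int.fract_nonneg y) (Int.fract_lt_one y) two_ne_zero
  rw [Int.two_mul_mul_fract_eq_fract_sq_add, hint, Int.fract_add_intCast,
    Int.fract_eq_self.2 ⟨sq_nonneg _, hsq_lt_one⟩]

/-- For every integer `x`, `({√2·x})² = {2·√2·x·{√2·x}}`, where `{·}` denotes the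
fractional part. -/
theorem fract_sqrt_two_identity (x : ℤ) :
    (Int.fract (Real.sqrt 2 * x)) ^ 2 =
      Int.fract (2 * Real.sqrt 2 * x * Int.fract (Real.sqrt 2 * x)) := by
  have hsq : (Real.sqrt 2 * x) ^ 2 = ((2 * x ^ 2 : ℤ) : ℝ) := by
    push_cast
    rw [mul_pow, Real.sq_sqrt zero_le_two]
  rw [mul_assoc 2 (Real.sqrt 2) (x : ℝ), Int.fract_two_mul_mul_fract_of_sq_eq_intCast hsq]
end

section
/- Let R be the subring of the polynomial ring ℚ[X] generated by X and (X² + 1)/3. Then R ∩ ℚ = ℤ; that is, every constant polynomial belonging to R is an integer. -/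
open Polynomial

/-! Evaluating at `i` sends `X` to `i` and `(X² + 1)/3` to `0`, so it maps the whole ring into
the Gaussian integers `ℤ[i]`, while it fixes constants; and the rationals in `ℤ[i]` are the
integers. -/

lemma GaussianInt.exists_intCast_eq_of_ratCast_mem_range_toComplex {q : ℚ}
    (h : (q : ℂ) ∈ GaussianInt.toComplex.range) : ∃ m : ℤ, (m : ℚ) = q := by
  obtain ⟨z, hz⟩ := h
  have hre : ((z.re : ℤ) : ℝ) = (q : ℝ) := by simpa using congrArg Complex.re hz
  exact ⟨z.re, by exact_mod_cast hre⟩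

lemma aeval_I_mem_range_toComplex_of_mem_closure {p : ℚ[X]}
    (hp : p ∈ Subring.closure {(X : ℚ[X]), C (1 / 3 : ℚ) * (X ^ 2 + 1)}) :
    aeval Complex.I p ∈ GaussianInt.toComplex.range := by
  refine (Subring.closure_le
    (t := GaussianInt.toComplex.range.comap (aeval Complex.I).toRingHom)).2 ?_ hp
  rintro p (rfl | rfl)
  · exact ⟨⟨0, 1⟩, by simp [GaussianInt.toComplex_def]⟩
  · exact ⟨0, by simp [Complex.I_sq]⟩

/-- Let `R` be the subring of `ℚ[X]` generated by `X` and `(X² + 1)/3`. Then the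
constant polynomials belonging to `R` are exactly the integers. -/
theorem constants_of_shepherdson_ring (q : ℚ) :
    C q ∈ Subring.closure {(X : ℚ[X]), C (1 / 3 : ℚ) * (X ^ 2 + 1)} ↔ ∃ m : ℤ, (m : ℚ) = q := by
  constructor
  · intro h
    have hq := aeval_I_mem_range_toComplex_of_mem_closure h
    rw [aeval_C, eq_ratCast] at hq
    exact GaussianInt.exists_intCast_eq_of_ratCast_mem_range_toComplex hq
  · rintro ⟨m, rfl⟩
    rw [C_eq_intCast]
    exact intCast_mem _ m
end

section
/- Let R be the subring of the polynomial ring ℚ[X] generated by X and (X² + 1)/3. There is no ring homomorphism from R to the ring ℤ₃ of 3-adic integers. -/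
open Polynomial

/-! Reducing modulo 3, a homomorphism `f` would give `f X ^ 2 + 1 ≡ 0` in `ZMod 3`,
but `-1` is not a square modulo 3. -/

theorem ZMod.sq_add_one_ne_zero_three (a : ZMod 3) : a ^ 2 + 1 ≠ 0 := by
  revert a
  decide

theorem PadicInt.not_three_dvd_sq_add_one (x : ℤ_[3]) : ¬ (3 : ℤ_[3]) ∣ x ^ 2 + 1 := by
  rintro ⟨y, hy⟩
  have hmod := congrArg PadicInt.toZMod hy
  rw [map_add, map_pow, map_one, map_mul, map_ofNat,
    show (3 : ZMod 3) = 0 from rfl, zero_mul] at hmod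
  exact ZMod.sq_add_one_ne_zero_three _ hmod

theorem isEmpty_ringHom_padicInt_three_of_three_dvd_sq_add_one {A : Type*} [Semiring A]
    {x : A} (hx : (3 : A) ∣ x ^ 2 + 1) : IsEmpty (A →+* ℤ_[3]) :=
  ⟨fun f ↦ PadicInt.not_three_dvd_sq_add_one (f x) <| by
    simpa only [map_ofNat, map_add, map_pow, map_one] using map_dvd f hx⟩

/-- Let `R` be the subring of `ℚ[X]` generated by `X` and `(X² + 1)/3`. There is no
(unital) ring homomorphism from `R` to the ring of 3-adic integers. -/
theorem no_hom_to_padic_three :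
    IsEmpty
      (↥(Subring.closure {(X : ℚ[X]), C (1 / 3 : ℚ) * (X ^ 2 + 1)}) →+* ℤ_[3]) := by
  set R := Subring.closure {(X : ℚ[X]), C (1 / 3 : ℚ) * (X ^ 2 + 1)}
  let x : R := ⟨X, Subring.subset_closure (by simp)⟩
  let y : R := ⟨C (1 / 3 : ℚ) * (X ^ 2 + 1), Subring.subset_closure (by simp)⟩
  have hxy : x ^ 2 + 1 = 3 * y := by
    ext
    simp only [x, y, Subring.coe_add, Subring.coe_pow, Subring.coe_one, Subring.coe_mul]
    rw [show ((3 : R) : ℚ[X]) = C 3 from rfl, ← mul_assoc, ← C_mul]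
    norm_num
  exact isEmpty_ringHom_padicInt_three_of_three_dvd_sq_add_one ⟨y, hxy⟩
end
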